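/- Let n ≥ 2. There exist constants C, D > 0 such that for all y ∈ ℝⁿ and all t ∈ ℝ with t ≠ 0, |ν̂(y,t)| ≤ (D·|y| + C)/|t|. -/

import Mathlib

open MeasureTheory Metric
open scoped RealInnerProductSpace

/-- The measure `ν` on `ℝⁿ × ℝ`: the pushforward of `μ ⊗ (s^{n-1} a(s) ds on (0,∞))`
under `(x, s) ↦ (s • x, s)`. -/
noncomputable def coneMeasure (n : ℕ) (μ : Measure (EuclideanSpace ℝ (Fin n)))
    (a : ℝ → ℝ) : Measure (EuclideanSpace ℝ (Fin n) × ℝ) :=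
  Measure.map (fun p : EuclideanSpace ℝ (Fin n) × ℝ => (p.2 • p.1, p.2))
    (μ.prod ((volume.restrict (Set.Ioi (0 : ℝ))).withDensity
      (fun s => ENNReal.ofReal (s ^ (n - 1) * a s))))

/-- The Fourier transform of a finite Borel measure `σ` on `ℝⁿ × ℝ`, evaluated at
`(y, t)`: `σ̂(y,t) = ∫ e^{-2πi(⟨y,x⟩ + t s)} dσ(x,s)`. -/
noncomputable def fourierMeasureProd (n : ℕ)
    (σ : Measure (EuclideanSpace ℝ (Fin n) × ℝ))
    (y : EuclideanSpace ℝ (Fin n)) (t : ℝ) : ℂ :=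
  ∫ p, Complex.exp (-(2 * Real.pi * Complex.I) * ((⟪y, p.1⟫ + t * p.2 : ℝ) : ℂ)) ∂σ

open Real FourierTransform
open scoped NNReal ENNReal

lemma osc_bound (h : ℝ → ℂ) (hi : Integrable h) (hd : Differentiable ℝ h)
    (hi' : Integrable (deriv h)) {l : ℝ} (hl : l ≠ 0) :
    ‖𝓕 h l‖ ≤ (∫ s, ‖deriv h s‖) / (2 * Real.pi * |l|) := by
  have key := congrFun (Real.fourier_deriv hi hd hi') l
  have h1 : ‖𝓕 (deriv h) l‖ = (2 * Real.pi * |l|) * ‖𝓕 h l‖ := by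
    rw [key, norm_smul]
    simp [Complex.norm_def, abs_of_pos Real.pi_pos, mul_assoc]
  have h2 : ‖𝓕 (deriv h) l‖ ≤ ∫ s, ‖deriv h s‖ :=
    VectorFourier.norm_fourierIntegral_le_integral_norm _ _ _ _ _
  have hpos : 0 < 2 * Real.pi * |l| := by positivity
  rw [le_div_iff₀ hpos]
  rw [h1] at h2; linarith

/-- Decay of `ν̂` in the `t` variable: there are `C, D > 0` such that
`|ν̂(y,t)| ≤ (D |y| + C)/|t|` for all `y ∈ ℝⁿ` and all `t ≠ 0`. -/
theorem coneMeasure_fourier_decay_in_t (n : ℕ) (hn : 2 ≤ n)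
    (μ : Measure (EuclideanSpace ℝ (Fin n))) [IsProbabilityMeasure μ]
    (hμ_sphere : μ (sphere (0 : EuclideanSpace ℝ (Fin n)) 1)ᶜ = 0)
    (hμ_rot : ∀ O : EuclideanSpace ℝ (Fin n) ≃ₗᵢ[ℝ] EuclideanSpace ℝ (Fin n),
      Measure.map O μ = μ)
    (a : ℝ → ℝ) (ha_smooth : ContDiff ℝ (⊤ : ℕ∞) a) (ha_nonneg : ∀ s, 0 ≤ a s)
    (ha_ne : a ≠ 0) (ha_supp : Function.support a ⊆ Set.Icc (1 / 2 : ℝ) 2) :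
    ∃ C > 0, ∃ D > 0, ∀ (y : EuclideanSpace ℝ (Fin n)) (t : ℝ), t ≠ 0 →
      ‖fourierMeasureProd n (coneMeasure n μ a) y t‖ ≤ (D * ‖y‖ + C) / |t| := by
  classical
  set g : ℝ → ℝ := fun s => s ^ (n - 1) * a s with hg_def
  have hg_smooth : ContDiff ℝ (⊤ : ℕ∞) g := (contDiff_id.pow _).mul ha_smooth
  have hg_cont : Continuous g := hg_smooth.continuous
  have hg_supp : ∀ s, s ∉ Set.Icc (1 / 2 : ℝ) 2 → g s = 0 := by
    intro s hs
    have : a s = 0 := by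
      by_contra hne
      exact hs (ha_supp hne)
    simp [hg_def, this]
  have hg_nonneg : ∀ s, 0 ≤ g s := by
    intro s
    by_cases hs : s ∈ Set.Icc (1 / 2 : ℝ) 2
    · exact mul_nonneg (pow_nonneg (by linarith [hs.1]) _) (ha_nonneg s)
    · rw [hg_supp s hs]
  have hg_cs : HasCompactSupport g := HasCompactSupport.intro isCompact_Icc hg_supp
  have hg_int : Integrable g := hg_cont.integrable_of_hasCompactSupport hg_cs
  set m : Measure ℝ := (volume.restrict (Set.Ioi (0 : ℝ))).withDensity
      (fun s => ENNReal.ofReal (g s)) with hm_def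
  haveI : IsFiniteMeasure m := isFiniteMeasure_withDensity_ofReal hg_int.restrict.2
  set h : ℝ → ℂ := fun s => (g s : ℂ) with hh_def
  have hh_smooth : ContDiff ℝ (⊤ : ℕ∞) h := Complex.ofRealCLM.contDiff.comp hg_smooth
  have hh_cs : HasCompactSupport h := by
    apply HasCompactSupport.intro (isCompact_Icc (a := (1/2:ℝ)) (b := 2))
    intro s hs; simp [hh_def, hg_supp s hs]
  have hh_int : Integrable h := hh_smooth.continuous.integrable_of_hasCompactSupport hh_cs
  have hh_diff : Differentiable ℝ h := hh_smooth.differentiable (by simp)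
  have hh_int' : Integrable (deriv h) :=
    (hh_smooth.continuous_deriv (by simp)).integrable_of_hasCompactSupport hh_cs.deriv
  set K : ℝ := ∫ s, ‖deriv h s‖ with hK_def
  have hK0 : 0 ≤ K := integral_nonneg fun s => norm_nonneg _
  set M : ℝ := (m Set.univ).toReal with hM_def
  have hM0 : 0 ≤ M := ENNReal.toReal_nonneg
  refine ⟨K / Real.pi + 1, by positivity, 2 * M + 1, by positivity, ?_⟩
  intro y t ht
  set G : EuclideanSpace ℝ (Fin n) × ℝ → ℂ :=
    fun p => Complex.exp (-(2 * Real.pi * Complex.I) * ((⟪y, p.2 • p.1⟫ + t * p.2 : ℝ) : ℂ))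
    with hG_def
  have hGnorm : ∀ p, ‖G p‖ = 1 := by
    intro p
    simp only [hG_def]
    rw [show -(2 * (Real.pi : ℂ) * Complex.I) * ((⟪y, p.2 • p.1⟫ + t * p.2 : ℝ) : ℂ)
        = ((-(2 * Real.pi * (⟪y, p.2 • p.1⟫ + t * p.2)) : ℝ) : ℂ) * Complex.I by
          push_cast; ring]
    exact Complex.norm_exp_ofReal_mul_I _
  have hGcont : Continuous G := by
    apply Complex.continuous_exp.comp
    apply continuous_const.mul
    exact Complex.continuous_ofReal.comp
      (((continuous_const.inner (continuous_snd.smul continuous_fst))).add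
        (continuous_const.mul continuous_snd))
  have hmap : fourierMeasureProd n (coneMeasure n μ a) y t = ∫ p, G p ∂(μ.prod m) := by
    have hcm : coneMeasure n μ a
        = Measure.map (fun p : EuclideanSpace ℝ (Fin n) × ℝ => (p.2 • p.1, p.2)) (μ.prod m) :=
      rfl
    have hT : Measurable fun p : EuclideanSpace ℝ (Fin n) × ℝ => (p.2 • p.1, p.2) :=
      ((continuous_snd.smul continuous_fst).prodMk continuous_snd).measurable
    have hF : Continuous fun q : EuclideanSpace ℝ (Fin n) × ℝ =>
        Complex.exp (-(2 * Real.pi * Complex.I) * ((⟪y, q.1⟫ + t * q.2 : ℝ) : ℂ)) := by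
      apply Complex.continuous_exp.comp
      apply continuous_const.mul
      exact Complex.continuous_ofReal.comp
        ((continuous_const.inner continuous_fst).add (continuous_const.mul continuous_snd))
    rw [fourierMeasureProd, hcm, integral_map hT.aemeasurable hF.aestronglyMeasurable]
  have hG_int : Integrable G (μ.prod m) := by
    refine (integrable_const (1 : ℝ)).mono' hGcont.aestronglyMeasurable ?_
    filter_upwards with p
    rw [hGnorm p]
  have hfub : ∫ p, G p ∂(μ.prod m) = ∫ x, ∫ s, G (x, s) ∂m ∂μ := integral_prod _ hG_int
  have hI_int : Integrable (fun x => ‖∫ s, G (x, s) ∂m‖) μ := hG_int.integral_prod_left.norm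
  have hinner : ∀ x : EuclideanSpace ℝ (Fin n),
      (∫ s, G (x, s) ∂m) = 𝓕 h (⟪y, x⟫ + t) := by
    intro x
    have hm' : m = (volume.restrict (Set.Ioi (0 : ℝ))).withDensity
        (fun s => (((g s).toNNReal : ℝ≥0) : ℝ≥0∞)) := rfl
    rw [hm', integral_withDensity_eq_integral_smul hg_cont.measurable.real_toNNReal]
    have e2 : ∀ s : ℝ, ((g s).toNNReal : ℝ≥0) • G (x, s) = g s • G (x, s) := by
      intro s
      rw [NNReal.smul_def, Real.coe_toNNReal _ (hg_nonneg s)]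
    simp only [e2]
    rw [setIntegral_eq_integral_of_forall_compl_eq_zero (by
      intro s hs
      have : g s = 0 := hg_supp s (by
        intro hmem
        exact hs (Set.mem_Ioi.mpr (by linarith [hmem.1])))
      simp [this])]
    rw [Real.fourier_real_eq_integral_exp_smul]
    congr 1 with s
    have earg : -(2 * (Real.pi : ℂ) * Complex.I) * ((⟪y, s • x⟫ + t * s : ℝ) : ℂ)
        = ((-2 * Real.pi * s * (⟪y, x⟫ + t) : ℝ) : ℂ) * Complex.I := by
      rw [real_inner_smul_right]
      push_cast; ring
    simp only [hG_def, hh_def, Complex.real_smul, smul_eq_mul]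
    rw [earg]
    ring
  have hae : ∀ᵐ x ∂μ, ‖x‖ = 1 := by
    rw [ae_iff]
    refine measure_mono_null ?_ hμ_sphere
    intro x hx
    simpa [mem_sphere_zero_iff_norm] using hx
  have hstep : ‖fourierMeasureProd n (coneMeasure n μ a) y t‖
      ≤ ∫ x, ‖∫ s, G (x, s) ∂m‖ ∂μ := by
    rw [hmap, hfub]
    exact norm_integral_le_integral_norm _
  by_cases hcase : 2 * ‖y‖ < |t|
  · have hbound : ∀ᵐ x ∂μ, ‖∫ s, G (x, s) ∂m‖ ≤ K / (Real.pi * |t|) := by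
      filter_upwards [hae] with x hx
      rw [hinner x]
      have hb : |⟪y, x⟫| ≤ ‖y‖ := by
        calc |⟪y, x⟫| ≤ ‖y‖ * ‖x‖ := abs_real_inner_le_norm y x
        _ = ‖y‖ := by rw [hx, mul_one]
      have hl : |t| / 2 ≤ |⟪y, x⟫ + t| := by
        have h3 : |t| ≤ |⟪y, x⟫ + t| + |⟪y, x⟫| := by
          calc |t| = |(⟪y, x⟫ + t) + (-⟪y, x⟫)| := by ring_nf
          _ ≤ |⟪y, x⟫ + t| + |(-⟪y, x⟫)| := abs_add_le _ _
          _ = |⟪y, x⟫ + t| + |⟪y, x⟫| := by rw [abs_neg]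
        linarith
      have hlne : ⟪y, x⟫ + t ≠ 0 := by
        intro h0
        rw [h0, abs_zero] at hl
        have := abs_pos.mpr ht
        linarith
      calc ‖𝓕 h (⟪y, x⟫ + t)‖ ≤ K / (2 * Real.pi * |⟪y, x⟫ + t|) :=
            osc_bound h hh_int hh_diff hh_int' hlne
      _ ≤ K / (2 * Real.pi * (|t| / 2)) := by
          have hpos : 0 < 2 * Real.pi * (|t| / 2) := by
            have := abs_pos.mpr ht; positivity
          gcongr
      _ = K / (Real.pi * |t|) := by congr 1; ring
    calc ‖fourierMeasureProd n (coneMeasure n μ a) y t‖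
        ≤ ∫ x, ‖∫ s, G (x, s) ∂m‖ ∂μ := hstep
    _ ≤ ∫ _, K / (Real.pi * |t|) ∂μ := integral_mono_ae hI_int (integrable_const _) hbound
    _ = K / (Real.pi * |t|) := by simp
    _ ≤ ((2 * M + 1) * ‖y‖ + (K / Real.pi + 1)) / |t| := by
        rw [← div_div]
        have htpos := abs_pos.mpr ht
        gcongr
        have : 0 ≤ (2 * M + 1) * ‖y‖ := by positivity
        linarith
  · have h1 : ‖fourierMeasureProd n (coneMeasure n μ a) y t‖ ≤ M := by
      rw [hmap]
      calc ‖∫ p, G p ∂(μ.prod m)‖ ≤ ∫ p, ‖G p‖ ∂(μ.prod m) := norm_integral_le_integral_norm _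
      _ = ∫ _, (1 : ℝ) ∂(μ.prod m) := by simp only [hGnorm]
      _ = M := by
          rw [integral_const, smul_eq_mul, mul_one, hM_def, ← Set.univ_prod_univ,
            measureReal_def, Measure.prod_prod, measure_univ, one_mul]
    refine h1.trans ?_
    rw [le_div_iff₀ (abs_pos.mpr ht)]
    push_neg at hcase
    have hKpi : 0 ≤ K / Real.pi := by positivity
    nlinarith [norm_nonneg y]
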